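/- arXiv:2304.07062 — 3 statements merged into one kernel-verified Lean document; each statement's English description precedes it below -/
import Mathlib

section
/- For every n : ℕ and all x x' θ θ' : Fin n → Bool: |⟪bb84 x' θ', bb84 x θ⟫|² = (1/2)^{d} if x i = x' i for every i with θ i = θ' i, and this quantity is 0 otherwise, where d is the cardinality of {i : Fin n | θ i ≠ θ' i}. -/
noncomputable def bb84 {n : ℕ} (x θ : Fin n → Bool) : (Fin n → Bool) → ℂ :=
  fun y => ∏ i : Fin n,
    if θ i = true then
      ((1 / Real.sqrt 2 : ℝ) : ℂ) * (-1 : ℂ) ^ (if x i = true ∧ y i = true then 1 else 0)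
    else (if y i = x i then (1 : ℂ) else 0)

noncomputable def qInner {n : ℕ} (u v : (Fin n → Bool) → ℂ) : ℂ :=
  ∑ y : Fin n → Bool, (starRingEnd ℂ) (u y) * v y

/-!
BB84 states are product states, so their overlap is the product of single-qubit overlaps.
Two qubits prepared in the same basis are orthonormal or equal, while a computational-basis
and a Hadamard-basis qubit always have overlap of modulus `1 / √2`.
-/

theorem Fintype.sum_conj_prod_mul_prod {ι α R : Type*} [Fintype ι] [DecidableEq ι] [Fintype α]
    [CommSemiring R] [StarRing R] (u v : ι → α → R) :
    ∑ y : ι → α, starRingEnd R (∏ i, u i (y i)) * ∏ i, v i (y i) =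
      ∏ i, ∑ a, starRingEnd R (u i a) * v i a := by
  rw [Fintype.prod_sum]
  simp only [map_prod, Finset.prod_mul_distrib]

/-- The amplitude of `H^θ |x⟩` at the basis vector `|b⟩`. -/
noncomputable def qubitAmp (x θ b : Bool) : ℂ :=
  if θ = true then ((1 / Real.sqrt 2 : ℝ) : ℂ) * (-1 : ℂ) ^ (if x = true ∧ b = true then 1 else 0)
  else if b = x then 1 else 0

noncomputable def qubitOverlap (x' θ' x θ : Bool) : ℂ :=
  ∑ b, starRingEnd ℂ (qubitAmp x' θ' b) * qubitAmp x θ b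

theorem qInner_bb84 {n : ℕ} (x x' θ θ' : Fin n → Bool) :
    qInner (bb84 x' θ') (bb84 x θ) = ∏ i, qubitOverlap (x' i) (θ' i) (x i) (θ i) :=
  Fintype.sum_conj_prod_mul_prod (fun i => qubitAmp (x' i) (θ' i)) (fun i => qubitAmp (x i) (θ i))

theorem qubitOverlap_same_basis (x' x θ : Bool) :
    qubitOverlap x' θ x θ = if x = x' then 1 else 0 := by
  have half : ((√2 : ℝ) : ℂ)⁻¹ * ((√2 : ℝ) : ℂ)⁻¹ = 1 / 2 := by
    rw [← mul_inv, ← Complex.ofReal_mul, Real.mul_self_sqrt zero_le_two]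
    norm_num
  cases θ <;> cases x <;> cases x' <;> norm_num [qubitOverlap, qubitAmp, half]

theorem norm_sq_qubitOverlap_of_ne {x' θ' x θ : Bool} (h : θ ≠ θ') :
    ‖qubitOverlap x' θ' x θ‖ ^ 2 = 1 / 2 := by
  cases θ <;> cases θ' <;> cases x <;> cases x' <;> simp_all [qubitOverlap, qubitAmp]

theorem norm_sq_qubitOverlap (x' θ' x θ : Bool) :
    ‖qubitOverlap x' θ' x θ‖ ^ 2 = if θ = θ' then (if x = x' then 1 else 0) else 1 / 2 := by
  by_cases hθ : θ = θ'
  · subst hθ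
    rw [if_pos rfl, qubitOverlap_same_basis]
    split_ifs <;> simp
  · rw [if_neg hθ, norm_sq_qubitOverlap_of_ne hθ]

theorem bb84_overlap (n : ℕ) (x x' θ θ' : Fin n → Bool) :
    ‖qInner (bb84 x' θ') (bb84 x θ)‖ ^ 2 =
      if ∀ i, θ i = θ' i → x i = x' i then
        (1 / 2 : ℝ) ^ (Finset.univ.filter fun i : Fin n => θ i ≠ θ' i).card
      else 0 := by
  rw [qInner_bb84, norm_prod, ← Finset.prod_pow]
  simp only [norm_sq_qubitOverlap]
  rw [Finset.prod_ite, Finset.prod_boole, Finset.prod_const, ite_mul, one_mul, zero_mul]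
  simp only [Finset.mem_filter, Finset.mem_univ, true_and]
end

section
/- Let n L : ℕ, x θ : Fin n → Bool, and let u u' : Fin n → Bool → (Fin L → Bool) be two Lamport signing keys satisfying u j b = u' j b for every j : Fin n and b : Bool such that θ j = true or b = x j. Then the signed BB84 states coincide: ψ x θ u = ψ x θ u'. In particular, for each position i with θ i = false, the signed BB84 state carries no information about the unused preimage u i (!(x i)). -/
def lamportSign {n L : ℕ} (u : Fin n → Bool → (Fin L → Bool)) (z : Fin n → Bool) :
    Fin n → (Fin L → Bool) :=
  fun j => u j (z j)

noncomputable def ψ {n L : ℕ} (x θ : Fin n → Bool)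
    (u : Fin n → Bool → (Fin L → Bool)) :
    ((Fin n → Bool) × (Fin n → (Fin L → Bool))) → ℂ :=
  fun p => if p.2 = lamportSign u p.1 then bb84 x θ p.1 else 0

lemma bb84_ne_zero_support {n : ℕ} (x θ z : Fin n → Bool)
    (hz : bb84 x θ z ≠ 0) (j : Fin n) (hj : θ j = false) : z j = x j := by
  by_contra hne
  apply hz
  apply Finset.prod_eq_zero (Finset.mem_univ j)
  simp [hj, hne]

theorem signed_bb84_key_independence (n L : ℕ) (x θ : Fin n → Bool)
    (u u' : Fin n → Bool → (Fin L → Bool))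
    (h : ∀ (j : Fin n) (b : Bool), (θ j = true ∨ b = x j) → u j b = u' j b) :
    ψ x θ u = ψ x θ u' := by
  funext p
  unfold ψ
  by_cases hz : bb84 x θ p.1 = 0
  · simp [hz]
  · have hsign : lamportSign u p.1 = lamportSign u' p.1 := by
      funext j
      unfold lamportSign
      rcases hθ : θ j with _ | _
      · exact h j (p.1 j) (Or.inr (bb84_ne_zero_support x θ p.1 hz j hθ))
      · exact h j (p.1 j) (Or.inl hθ)
    rw [hsign]
end

section
/- Let n L : ℕ, x θ : Fin n → Bool, and u : Fin n → Bool → (Fin L → Bool). For all z : Fin n → Bool and s : Fin n → (Fin L → Bool): ‖ψ x θ u (z, s)‖² = (1/2)^{w(θ)} if both (z i = x i for every i with θ i = false) and s = Sign u z hold, and ‖ψ x θ u (z, s)‖² = 0 otherwise. In particular, every computational-basis measurement outcome of the signed BB84 state agrees with x at every position i with θ i = false and carries the honest Lamport signature of its message part. -/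
lemma bb84_norm_sq {n : ℕ} (x θ z : Fin n → Bool) :
    ‖bb84 x θ z‖ ^ 2 =
      if ∀ i, θ i = false → z i = x i then
        (1 / 2 : ℝ) ^ (Finset.univ.filter fun i : Fin n => θ i = true).card
      else 0 := by
  have hfac : ∀ i : Fin n,
      ‖if θ i = true then
          ((1 / Real.sqrt 2 : ℝ) : ℂ) * (-1 : ℂ) ^ (if x i = true ∧ z i = true then 1 else 0)
        else (if z i = x i then (1 : ℂ) else 0)‖ ^ 2 =
      if θ i = true then (1/2 : ℝ) else (if z i = x i then 1 else 0) := by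
    intro i
    by_cases h : θ i = true
    · simp only [h, if_true, norm_mul, norm_pow, norm_neg, norm_one, one_pow, mul_one,
        Complex.norm_real, Real.norm_eq_abs, mul_pow]
      rw [sq_abs]
      rw [div_pow, one_pow, Real.sq_sqrt (by norm_num : (2:ℝ) ≥ 0)]
    · simp only [h, if_false]
      by_cases hz : z i = x i <;> simp [hz]
  rw [bb84, norm_prod, ← Finset.prod_pow]
  simp only [hfac]
  by_cases hc : ∀ i, θ i = false → z i = x i
  · rw [if_pos hc]
    rw [← Finset.prod_filter_mul_prod_filter_not Finset.univ (fun i => θ i = true)]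
    have h1 : ∀ i ∈ Finset.univ.filter (fun i : Fin n => θ i = true),
        (if θ i = true then (1/2 : ℝ) else (if z i = x i then 1 else 0)) = (1/2 : ℝ) := by
      intro i hi
      simp at hi; simp [hi]
    have h2 : ∀ i ∈ Finset.univ.filter (fun i : Fin n => ¬ θ i = true),
        (if θ i = true then (1/2 : ℝ) else (if z i = x i then 1 else 0)) = 1 := by
      intro i hi
      simp at hi
      have := hc i (by simp [hi])
      simp [hi, this]
    rw [Finset.prod_congr rfl h1, Finset.prod_congr rfl h2, Finset.prod_const, Finset.prod_const_one, mul_one]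
  · rw [if_neg hc]
    push_neg at hc
    obtain ⟨i, hi, hzi⟩ := hc
    apply Finset.prod_eq_zero (Finset.mem_univ i)
    have : θ i ≠ true := by simp [hi]
    simp [this, hzi]

theorem signed_bb84_measurement (n L : ℕ) (x θ : Fin n → Bool)
    (u : Fin n → Bool → (Fin L → Bool))
    (z : Fin n → Bool) (s : Fin n → (Fin L → Bool)) :
    ‖ψ x θ u (z, s)‖ ^ 2 =
      if (∀ i, θ i = false → z i = x i) ∧ s = lamportSign u z then
        (1 / 2 : ℝ) ^ (Finset.univ.filter fun i : Fin n => θ i = true).card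
      else 0 := by
  unfold ψ
  by_cases hs : s = lamportSign u z
  · simp only [hs, if_true, bb84_norm_sq, and_true]
  · simp [hs]
end
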